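/- For G = 1/2 and N ≥ 2, the De Vergottini index of the Gini-stable vector equals 𝓥(p^{(N,1/2)}) = (N − H_N)/(N·(H_N − 1)). -/

import Mathlib

open Finset Real Filter

/-- Coefficient a_N(G) of the Gini-stable process. -/
noncomputable def giniA (G : ℝ) (N : ℕ) : ℝ :=
  (1 - G) / ((N : ℝ) * (G * ((N : ℝ) - 2) + 1))

/-- Coefficient b_N(G) of the Gini-stable process. -/
noncomputable def giniB (G : ℝ) (N : ℕ) : ℝ :=
  G * ((N : ℝ) - 1) / (G * ((N : ℝ) - 2) + 1)

/-- Entries p_k^{(N,G)} of the Gini-stable process (1-indexed in k). -/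
noncomputable def giniP (G : ℝ) : ℕ → ℕ → ℝ
  | 0, _ => 0
  | 1, k => if k = 1 then 1 else 0
  | N + 2, k =>
      giniA G (N + 2) + giniB G (N + 2) * (if k ≤ N + 1 then giniP G (N + 1) k else 0)

/-- Harmonic number H_m = ∑_{i=1}^m 1/i, with H 0 = 0. -/
noncomputable def H (m : ℕ) : ℝ := ∑ i ∈ Finset.range m, (1 : ℝ) / (i + 1)

lemma H_succ (n : ℕ) : H (n + 1) = H n + 1 / ((n : ℝ) + 1) := by
  simp [H, Finset.sum_range_succ]

lemma one_lt_H (N : ℕ) (hN : 2 ≤ N) : 1 < H N := by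
  induction N with
  | zero => omega
  | succ n ih =>
    rcases Nat.lt_or_ge n 2 with h | h
    · interval_cases n
      · omega
      · norm_num [H_succ, H, Finset.sum_range_succ]
    · have := ih h
      rw [H_succ]
      have : (0:ℝ) < 1 / ((n:ℝ)+1) := by positivity
      linarith [ih h]

lemma giniA_half (m : ℕ) : giniA (1/2) (m + 2) = 1 / ((m : ℝ) + 2)^2 := by
  unfold giniA
  have : ((m:ℕ) + 2 : ℕ) = (m:ℕ) + 2 := rfl
  push_cast
  have h : ((m:ℝ) + 2) ≠ 0 := by positivity
  field_simp
  rw [show ((m:ℝ) + 2 - 2 + 2) = (m:ℝ) + 2 by ring]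
  field_simp
  ring

lemma giniB_half (m : ℕ) : giniB (1/2) (m + 2) = ((m : ℝ) + 1) / ((m : ℝ) + 2) := by
  unfold giniB
  push_cast
  have h : ((m:ℝ) + 2) ≠ 0 := by positivity
  field_simp
  rw [show ((m:ℝ) + 2 - 2 + 2) = (m:ℝ) + 2 by ring]
  field_simp
  ring

lemma Pform : ∀ N : ℕ, 1 ≤ N → ∀ k : ℕ, 1 ≤ k → k ≤ N →
    giniP (1/2) N k = (H N - H (k - 1)) / N := by
  intro N hN
  induction N, hN using Nat.le_induction with
  | base =>
    intro k hk1 hk2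
    have : k = 1 := by omega
    subst this
    simp [giniP, H, Finset.sum_range_succ]
  | succ n hn ih =>
    intro k hk1 hk2
    obtain ⟨m, rfl⟩ : ∃ m, n = m + 1 := ⟨n - 1, by omega⟩
    show giniP (1/2) (m + 2) k = _
    rw [giniP, giniA_half, giniB_half]
    have hm2 : ((m:ℝ) + 2) ≠ 0 := by positivity
    have hrw : H (m + 2) = H (m + 1) + 1 / ((m:ℝ) + 1 + 1) := by
      have := H_succ (m + 1); push_cast at this; exact this
    by_cases hk : k ≤ m + 1
    · rw [if_pos hk, ih k hk1 hk, hrw]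
      push_cast
      have hm1 : ((m:ℝ) + 1) ≠ 0 := by positivity
      field_simp
      ring
    · rw [if_neg hk]
      have hkm : k = m + 2 := by omega
      subst hkm
      rw [hrw, show (m + 2 - 1 : ℕ) = m + 1 from rfl]
      push_cast
      field_simp
      ring

lemma sumA (N : ℕ) : ∑ k ∈ Finset.Icc 1 N, H (k - 1) = N * H N - N := by
  induction N with
  | zero => simp [H]
  | succ n ih =>
    rw [← Finset.Ico_add_one_right_eq_Icc, Finset.sum_Ico_succ_top (by omega), Finset.Ico_add_one_right_eq_Icc, ih]
    rw [H_succ]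
    have : ((n:ℕ) + 1 - 1 : ℕ) = n := rfl
    rw [this]
    push_cast
    have h : ((n:ℝ) + 1) ≠ 0 := by positivity
    field_simp
    ring

lemma sumB (N : ℕ) : ∑ k ∈ Finset.Icc 1 N, (H (k - 1))^2
    = N * (H N)^2 - (2 * N + 1) * H N + 2 * N := by
  induction N with
  | zero => simp [H]
  | succ n ih =>
    rw [← Finset.Ico_add_one_right_eq_Icc, Finset.sum_Ico_succ_top (by omega), Finset.Ico_add_one_right_eq_Icc, ih]
    rw [H_succ]
    have : ((n:ℕ) + 1 - 1 : ℕ) = n := rfl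
    rw [this]
    push_cast
    have h : ((n:ℝ) + 1) ≠ 0 := by positivity
    field_simp
    ring

theorem stmt15 (N : ℕ) (hN : 2 ≤ N) :
    1 - (∑ k ∈ Finset.Icc 1 N, giniP (1/2) N k * H (k - 1)) / (H N - 1) =
      ((N : ℝ) - H N) / ((N : ℝ) * (H N - 1)) := by
  have hN0 : ((N:ℝ)) ≠ 0 := by positivity
  have hH1 : H N - 1 ≠ 0 := by have := one_lt_H N hN; linarith
  have key : ∑ k ∈ Finset.Icc 1 N, giniP (1/2) N k * H (k - 1)
      = (((N:ℝ) + 1) * H N - 2 * N) / N := by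
    rw [Finset.sum_congr rfl (fun k hk => by
      rw [Pform N (by omega) k (Finset.mem_Icc.mp hk).1 (Finset.mem_Icc.mp hk).2])]
    have step : ∑ k ∈ Finset.Icc 1 N, (H N - H (k - 1)) / N * H (k - 1)
        = (H N * (∑ k ∈ Finset.Icc 1 N, H (k - 1))
          - ∑ k ∈ Finset.Icc 1 N, (H (k - 1))^2) / N := by
      rw [Finset.mul_sum, ← Finset.sum_sub_distrib, Finset.sum_div]
      exact Finset.sum_congr rfl fun k _ => by ring
    rw [step, sumA, sumB]
    field_simp
    ring
  rw [key]
  field_simp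
  ring
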